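/- Every maximal abelian subgroup of diagonalizable elements of G = SL₂(F)² ⋊ ⟨δ⟩ that is contained in N² = (T∪Tσ)² and meets T²·(σ,σ) nontrivially is conjugate in G to a proper subgroup of T², contradicting maximality; more precisely, if an abelian subgroup A of N² contains an element (t₁σ, t₂σ), then every element of A lies in {(±t₁σ, ±t₂σ), (±1, ±t₂σ), (±t₁σ, ±1), (±1, ±1)}. -/

import Mathlib

open Matrix

/-- The matrix σ = [[0,1],[-1,0]] as an element of SL₂(F). -/
def sigmaSL (F : Type*) [Field F] : Matrix.SpecialLinearGroup (Fin 2) F :=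
  ⟨!![0, 1; -1, 0], by simp [Matrix.det_fin_two_of]⟩

/-- The diagonal matrix diag(λ, λ⁻¹) as an element of SL₂(F). -/
def torusSL (F : Type*) [Field F] (l : Fˣ) : Matrix.SpecialLinearGroup (Fin 2) F :=
  ⟨!![(l : F), 0; 0, ((l⁻¹ : Fˣ) : F)], by simp [Matrix.det_fin_two_of]⟩

/-- The diagonal torus T of SL₂(F), as a set. -/
def torusSet (F : Type*) [Field F] : Set (Matrix.SpecialLinearGroup (Fin 2) F) :=
  {g | ∃ l : Fˣ, g = torusSL F l}

/-- The set N = T ∪ Tσ, the normalizer of the diagonal torus in SL₂(F). -/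
def normSet (F : Type*) [Field F] : Set (Matrix.SpecialLinearGroup (Fin 2) F) :=
  torusSet F ∪ ((fun t => t * sigmaSL F) '' torusSet F)

instance : Fact (Even (Fintype.card (Fin 2))) := ⟨by simp⟩

/-!
Conjugation by `tσ` inverts the torus `T`, so a torus element commuting with `tσ` squares to `1`,
and an element `sσ` of `N` commuting with `tσ` differs from it by such a torus element; hence the
centralizer of `tσ` in `N` is `{±tσ, ±1}`. Conjugating by a square root of `t` in `T` moves `tσ`
to `σ`, whose eigenvalues are `±i`, so one conjugation per factor puts all of `A` inside
`{±diag(i, -i), ±1}²`, which misses `(diag(2, 1/2), 1)` in characteristic zero.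
-/

namespace SL2Normalizer

open Matrix.SpecialLinearGroup

lemma conj_mem_insert_neg {G : Type*} [Group G] [HasDistribNeg G] {b x : G} (p : G)
    (hx : x ∈ ({b, -b, 1, -1} : Set G)) :
    p * x * p⁻¹ ∈ ({p * b * p⁻¹, -(p * b * p⁻¹), 1, -1} : Set G) := by
  rcases hx with rfl | rfl | rfl | rfl <;> simp

lemma units_eq_one_or_eq_neg_one_of_mul_self {R : Type*} [Ring R] [NoZeroDivisors R] {m : Rˣ}
    (h : m * m = 1) : m = 1 ∨ m = -1 := by
  rcases mul_self_eq_one_iff.mp (congr_arg Units.val h) with h' | h'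
  · exact .inl (Units.ext h')
  · exact .inr (Units.ext (by simpa using h'))

variable {F : Type*} [Field F]

lemma exists_units_mul_self_eq [IsAlgClosed F] (a : Fˣ) : ∃ μ : Fˣ, μ * μ = a := by
  obtain ⟨z, hz⟩ := IsAlgClosed.exists_eq_mul_self (a : F)
  have hz0 : z ≠ 0 := by
    rintro rfl
    simp at hz
  exact ⟨Units.mk0 z hz0, Units.ext (by simp [hz])⟩

@[simp]
lemma torusSL_one : torusSL F 1 = 1 :=
  Subtype.ext (by simp [torusSL, Matrix.one_fin_two])

lemma torusSL_mul (a b : Fˣ) : torusSL F (a * b) = torusSL F a * torusSL F b := by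
  refine Subtype.ext ?_
  rw [coe_mul]
  simp [torusSL, mul_comm]

lemma torusSL_inv (a : Fˣ) : torusSL F a⁻¹ = (torusSL F a)⁻¹ :=
  eq_inv_of_mul_eq_one_left (by rw [← torusSL_mul, inv_mul_cancel, torusSL_one])

lemma torusSL_neg (a : Fˣ) : torusSL F (-a) = -torusSL F a := by
  refine Subtype.ext ?_
  rw [coe_neg]
  simp [torusSL]

lemma torusSL_injective : Function.Injective (torusSL F) := fun a b h =>
  Units.ext <| by
    simpa [torusSL] using congr_arg (fun g : Matrix.SpecialLinearGroup (Fin 2) F => g 0 0) h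

lemma torusSL_mem_torusSet (a : Fˣ) : torusSL F a ∈ torusSet F := ⟨a, rfl⟩

lemma insert_neg_torusSL_subset_torusSet (a : Fˣ) :
    ({torusSL F a, -torusSL F a, 1, -1} : Set _) ⊆ torusSet F := by
  rintro x (rfl | rfl | rfl | rfl)
  · exact torusSL_mem_torusSet a
  · exact ⟨-a, (torusSL_neg a).symm⟩
  · exact ⟨1, torusSL_one.symm⟩
  · exact ⟨-1, by rw [torusSL_neg, torusSL_one]⟩

lemma sigmaSL_mul_torusSL (a : Fˣ) : sigmaSL F * torusSL F a = torusSL F a⁻¹ * sigmaSL F := by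
  refine Subtype.ext ?_
  rw [coe_mul, coe_mul]
  simp [torusSL, sigmaSL]

lemma torusSL_mul_sigmaSL_mul_torusSL (l m : Fˣ) :
    torusSL F l * sigmaSL F * torusSL F m = torusSL F m⁻¹ * (torusSL F l * sigmaSL F) := by
  rw [mul_assoc, sigmaSL_mul_torusSL, ← mul_assoc, ← mul_assoc, ← torusSL_mul, ← torusSL_mul,
    mul_comm]

lemma eq_one_or_eq_neg_one_of_commute {l m : Fˣ}
    (h : Commute (torusSL F m) (torusSL F l * sigmaSL F)) : m = 1 ∨ m = -1 := by
  have hinv : torusSL F m = torusSL F m⁻¹ :=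
    mul_right_cancel (h.eq.trans (torusSL_mul_sigmaSL_mul_torusSL l m))
  exact units_eq_one_or_eq_neg_one_of_mul_self
    (eq_inv_iff_mul_eq_one.mp (torusSL_injective hinv))

lemma mem_of_mem_normSet_of_commute {l : Fˣ} {x : Matrix.SpecialLinearGroup (Fin 2) F}
    (hx : x ∈ normSet F) (h : Commute x (torusSL F l * sigmaSL F)) :
    x ∈ ({torusSL F l * sigmaSL F, -(torusSL F l * sigmaSL F), 1, -1} : Set _) := by
  rcases hx with ⟨m, rfl⟩ | ⟨_, ⟨m, rfl⟩, rfl⟩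
  · rcases eq_one_or_eq_neg_one_of_commute h with rfl | rfl <;> simp [torusSL_neg]
  · dsimp only at h ⊢
    have hm : torusSL F m * sigmaSL F = torusSL F (m / l) * (torusSL F l * sigmaSL F) := by
      rw [← mul_assoc, ← torusSL_mul, div_mul_cancel]
    rw [hm] at h ⊢
    have h' : Commute (torusSL F (m / l)) (torusSL F l * sigmaSL F) :=
      ((IsRightRegular.all _).commute_mul_right_iff.mp h).symm
    rcases eq_one_or_eq_neg_one_of_commute h' with h1 | h1 <;> simp [h1, torusSL_neg]

lemma torusSL_conj_torusSL_mul_sigmaSL (μ l : Fˣ) :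
    torusSL F μ * (torusSL F l * sigmaSL F) * (torusSL F μ)⁻¹ =
      torusSL F (μ * μ * l) * sigmaSL F := by
  rw [← torusSL_inv, mul_assoc, torusSL_mul_sigmaSL_mul_torusSL, inv_inv, ← mul_assoc,
    ← mul_assoc, ← torusSL_mul, ← torusSL_mul]

lemma exists_conj_sigmaSL [NeZero (2 : F)] {i : Fˣ} (hi : i * i = -1) :
    ∃ p : Matrix.SpecialLinearGroup (Fin 2) F, p * sigmaSL F * p⁻¹ = torusSL F i := by
  have hi' : (i : F) * i = -1 := by simpa using congr_arg Units.val hi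
  have hinv : ((i⁻¹ : Fˣ) : F) = -i := by
    rw [Units.val_inv_eq_inv_val, inv_eq_of_mul_eq_one_right]
    linear_combination -hi'
  -- the rows of `p` are left eigenvectors of `σ` for the eigenvalues `i` and `-i`
  let p : Matrix.SpecialLinearGroup (Fin 2) F :=
    ⟨!![1, -i; -i / 2, 1 / 2], by
      simp only [Matrix.det_fin_two_of]
      field_simp
      linear_combination -hi'⟩
  refine ⟨p, ?_⟩
  have key : p * sigmaSL F = torusSL F i * p := by
    refine Subtype.ext ?_
    rw [coe_mul, coe_mul]
    ext j k
    fin_cases j <;> fin_cases k <;> simp [p, torusSL, sigmaSL, hinv, Matrix.mul_apply] <;> grind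
  rw [key, mul_inv_cancel_right]

lemma exists_conj_torusSL_mul_sigmaSL [IsAlgClosed F] [NeZero (2 : F)] (l : Fˣ) {i : Fˣ}
    (hi : i * i = -1) :
    ∃ p : Matrix.SpecialLinearGroup (Fin 2) F,
      p * (torusSL F l * sigmaSL F) * p⁻¹ = torusSL F i := by
  obtain ⟨μ, hμ⟩ := exists_units_mul_self_eq l⁻¹
  obtain ⟨p, hp⟩ := exists_conj_sigmaSL hi
  refine ⟨p * torusSL F μ, ?_⟩
  calc p * torusSL F μ * (torusSL F l * sigmaSL F) * (p * torusSL F μ)⁻¹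
      = p * (torusSL F μ * (torusSL F l * sigmaSL F) * (torusSL F μ)⁻¹) * p⁻¹ := by group
    _ = torusSL F i := by
      rw [torusSL_conj_torusSL_mul_sigmaSL, hμ, inv_mul_cancel, torusSL_one, one_mul, hp]

lemma torusSL_two_notMem [CharZero F] {i : Fˣ} (hi : i * i = -1) :
    torusSL F (Units.mk0 2 two_ne_zero) ∉ ({torusSL F i, -torusSL F i, 1, -1} : Set _) := by
  have hi' : (i : F) * i = -1 := by simpa using congr_arg Units.val hi
  rw [← torusSL_one, ← torusSL_neg, ← torusSL_neg]
  simp only [Set.mem_insert_iff, Set.mem_singleton_iff, torusSL_injective.eq_iff, Units.ext_iff,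
    Units.val_mk0, Units.val_neg, Units.val_one]
  rintro (h | h | h | h)
  · have : (5 : F) = 0 := by linear_combination (2 + (i : F)) * h + hi'
    norm_num at this
  · have : (5 : F) = 0 := by linear_combination (2 - (i : F)) * h + hi'
    norm_num at this
  · norm_num at h
  · norm_num at h

end SL2Normalizer

open SL2Normalizer in
/-- If an abelian subgroup A of N² = (T ∪ Tσ)² contains an element (t₁σ, t₂σ), then every
element of A lies in {(±t₁σ,±t₂σ), (±1,±t₂σ), (±t₁σ,±1), (±1,±1)}; consequently A is
conjugate (componentwise, inside SL₂(F)²) to a proper subgroup of the torus T². -/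
theorem abelian_subgroup_meeting_sigma_sigma {F : Type*} [Field F] [IsAlgClosed F] [CharZero F]
    (t₁ t₂ : Matrix.SpecialLinearGroup (Fin 2) F)
    (ht₁ : t₁ ∈ torusSet F) (ht₂ : t₂ ∈ torusSet F)
    (A : Subgroup (Matrix.SpecialLinearGroup (Fin 2) F × Matrix.SpecialLinearGroup (Fin 2) F))
    (habelian : ∀ a ∈ A, ∀ b ∈ A, a * b = b * a)
    (hsub : (A : Set (Matrix.SpecialLinearGroup (Fin 2) F ×
        Matrix.SpecialLinearGroup (Fin 2) F)) ⊆ (normSet F) ×ˢ (normSet F))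
    (hmem : (t₁ * sigmaSL F, t₂ * sigmaSL F) ∈ A) :
    (∀ a ∈ A, a.1 ∈ ({t₁ * sigmaSL F, -(t₁ * sigmaSL F), 1, -1} :
        Set (Matrix.SpecialLinearGroup (Fin 2) F)) ∧
      a.2 ∈ ({t₂ * sigmaSL F, -(t₂ * sigmaSL F), 1, -1} :
        Set (Matrix.SpecialLinearGroup (Fin 2) F))) ∧
    ∃ p q : Matrix.SpecialLinearGroup (Fin 2) F,
      (∀ a ∈ A, p * a.1 * p⁻¹ ∈ torusSet F ∧ q * a.2 * q⁻¹ ∈ torusSet F) ∧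
      ∃ w : Matrix.SpecialLinearGroup (Fin 2) F × Matrix.SpecialLinearGroup (Fin 2) F,
        w.1 ∈ torusSet F ∧ w.2 ∈ torusSet F ∧
        w ∉ (fun a : Matrix.SpecialLinearGroup (Fin 2) F ×
            Matrix.SpecialLinearGroup (Fin 2) F =>
          (p * a.1 * p⁻¹, q * a.2 * q⁻¹)) '' (A : Set _) := by
  obtain ⟨l₁, rfl⟩ := ht₁
  obtain ⟨l₂, rfl⟩ := ht₂
  have hA : ∀ a ∈ A, a.1 ∈ ({torusSL F l₁ * sigmaSL F, -(torusSL F l₁ * sigmaSL F), 1, -1} :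
        Set _) ∧ a.2 ∈ ({torusSL F l₂ * sigmaSL F, -(torusSL F l₂ * sigmaSL F), 1, -1} : Set _) :=
    fun a ha =>
      ⟨mem_of_mem_normSet_of_commute (hsub ha).1 (congr_arg Prod.fst (habelian a ha _ hmem)),
        mem_of_mem_normSet_of_commute (hsub ha).2 (congr_arg Prod.snd (habelian a ha _ hmem))⟩
  obtain ⟨i, hi⟩ := exists_units_mul_self_eq (-1 : Fˣ)
  obtain ⟨p, hp⟩ := exists_conj_torusSL_mul_sigmaSL l₁ hi
  obtain ⟨q, hq⟩ := exists_conj_torusSL_mul_sigmaSL l₂ hi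
  have hconj₁ : ∀ a ∈ A, p * a.1 * p⁻¹ ∈ ({torusSL F i, -torusSL F i, 1, -1} : Set _) :=
    fun a ha => hp ▸ conj_mem_insert_neg p (hA a ha).1
  have hconj₂ : ∀ a ∈ A, q * a.2 * q⁻¹ ∈ ({torusSL F i, -torusSL F i, 1, -1} : Set _) :=
    fun a ha => hq ▸ conj_mem_insert_neg q (hA a ha).2
  refine ⟨hA, p, q, fun a ha => ⟨insert_neg_torusSL_subset_torusSet i (hconj₁ a ha),
    insert_neg_torusSL_subset_torusSet i (hconj₂ a ha)⟩,
    (torusSL F (Units.mk0 2 two_ne_zero), 1), torusSL_mem_torusSet _, ⟨1, torusSL_one.symm⟩, ?_⟩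
  rintro ⟨a, ha, heq⟩
  have hfst : p * a.1 * p⁻¹ = torusSL F (Units.mk0 2 two_ne_zero) := congr_arg Prod.fst heq
  exact torusSL_two_notMem hi (hfst ▸ hconj₁ a ha)
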